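/- Let val : ℕ → Bool be the valency along a solo run of process p_1 from a 1-valent configuration C to a deciding configuration D_1, and suppose each configuration Z_i in the run has an associated configuration Z'_i (the result of applying a fixed enabled step e of process p_0) which is univalent, with Z'_0 being 0-valent and Z'_k being 1-valent. Then there exists s < k such that Z'_s is 0-valent while Z_s, Z_{s+1}, and Z'_{s+1} are all 1-valent. -/

import Mathlib

theorem Nat.exists_lt_not_and_succ_of_not_zero {p : ℕ → Prop} {k : ℕ} (h0 : ¬p 0) (hk : p k) :
    ∃ s < k, ¬p s ∧ p (s + 1) := by
  -- clamping at `k` keeps the crossing point found by the unbounded version below `k`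
  obtain ⟨s, hs, hs1⟩ := Nat.exists_not_and_succ_of_not_zero_of_exists
    (p := fun n => p (min n k)) (by simpa using h0) ⟨k, by simpa using hk⟩
  have hsk : s < k := by
    by_contra! hks
    exact hs (by rwa [min_eq_right hks])
  exact ⟨s, hsk, by rwa [min_eq_left hsk.le] at hs, by rwa [min_eq_left hsk] at hs1⟩

/-- Along a solo run `Z_0, ..., Z_k` of 1-valent configurations (valency `val i = true`
for all `i ≤ k`), whose associated configurations `Z'_i` (result of applying a fixed
enabled step of `p_0`) are univalent with `Z'_0` 0-valent (`val' 0 = false`) and `Z'_k`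
1-valent (`val' k = true`), there is an index `s < k` with `Z'_s` 0-valent while `Z_s`,
`Z_{s+1}` and `Z'_{s+1}` are all 1-valent. -/
theorem exists_critical_index (k : ℕ) (val val' : ℕ → Bool)
    (hval : ∀ i ≤ k, val i = true)
    (h0 : val' 0 = false) (hk : val' k = true) :
    ∃ s < k, val' s = false ∧ val s = true ∧ val (s + 1) = true ∧ val' (s + 1) = true := by
  obtain ⟨s, hsk, hs, hs1⟩ :=
    Nat.exists_lt_not_and_succ_of_not_zero (p := fun i => val' i = true) (by simp [h0]) hk
  exact ⟨s, hsk, by simpa using hs, hval s hsk.le, hval (s + 1) hsk, hs1⟩
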